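/- arXiv:1910.00901 — 5 statements merged into one kernel-verified Lean document; each statement's English description precedes it below -/
import Mathlib

section
/- In any generalized grid graph, the shortest-path cost c from (0,0) satisfies, for every vertex (i,d): (1) 0 ≤ c(i,d) − c(i−1,d) ≤ 1 whenever (i−1,d) is a reachable vertex of the graph; (2) −1 ≤ c(i,d) − c(i,d−1) ≤ 1 whenever (i,d−1) is a reachable vertex of the graph; (3) −1 ≤ c(i,d) − c(i−1,d+1) ≤ 1 whenever (i−1,d+1) is a reachable vertex of the graph. -/
namespace Stmt1

/-- Total weight of a list of vertices regarded as a walk. -/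
def pathCost {V : Type*} (wt : V → V → ℕ) : List V → ℕ
  | [] => 0
  | [_] => 0
  | a :: b :: l => wt a b + pathCost wt (b :: l)

/-- `l` is a directed path (walk) from `s` to `v` in the graph with edge relation `E`. -/
def IsPath {V : Type*} (E : V → V → Prop) (s v : V) (l : List V) : Prop :=
  l.head? = some s ∧ l.getLast? = some v ∧ l.Chain' E

/-- Shortest-path cost from `s` to `v`. -/
noncomputable def cost {V : Type*} (E : V → V → Prop) (wt : V → V → ℕ) (s v : V) : ℕ :=
  sInf { c | ∃ l : List V, IsPath E s v l ∧ pathCost wt l = c }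

/-- Vertices of a generalized grid graph with rows `[0..N]` and diagonals `[-t..t]`. -/
def ggVertex (N t : ℕ) (v : ℤ × ℤ) : Prop :=
  0 ≤ v.1 ∧ v.1 ≤ (N : ℤ) ∧ -(t : ℤ) ≤ v.2 ∧ v.2 ≤ (t : ℤ)

/-- Edges of a generalized grid graph: deletion edges `(i,d) → (i+1,d-1)`,
insertion edges `(i,d) → (i,d+1)`, vertical edges `(i,d) → (i+1,d)`;
present only when both endpoints are vertices. -/
def ggEdge (N t : ℕ) (u v : ℤ × ℤ) : Prop :=
  ggVertex N t u ∧ ggVertex N t v ∧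
    (v = (u.1 + 1, u.2 - 1) ∨ v = (u.1, u.2 + 1) ∨ v = (u.1 + 1, u.2))

/-- Weights: a vertical edge `(i,d) → (i+1,d)` has weight `w (i+1) d`;
deletion and insertion edges have weight `1`. -/
def ggWt (w : ℤ → ℤ → ℕ) (u v : ℤ × ℤ) : ℕ :=
  if v = (u.1 + 1, u.2) then w v.1 v.2 else 1

/-- A vertex `(i,d)` is reachable if `i + d ≥ 0`. -/
def Reachable (N t : ℕ) (v : ℤ × ℤ) : Prop := ggVertex N t v ∧ 0 ≤ v.1 + v.2

/-- Shortest-path cost `c(i,d)` from `(0,0)` in the generalized grid graph. -/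
noncomputable def ggCost (N t : ℕ) (w : ℤ → ℤ → ℕ) (v : ℤ × ℤ) : ℕ :=
  cost (ggEdge N t) (ggWt w) (0, 0) v

/-- `(i,d)` is dominated by `(i,d-1)`. -/
def DomL (N t : ℕ) (w : ℤ → ℤ → ℕ) (v : ℤ × ℤ) : Prop :=
  Reachable N t v ∧ Reachable N t (v.1, v.2 - 1) ∧
    ggCost N t w (v.1, v.2 - 1) + 1 = ggCost N t w v

/-- `(i,d)` is dominated by `(i-1,d+1)`. -/
def DomU (N t : ℕ) (w : ℤ → ℤ → ℕ) (v : ℤ × ℤ) : Prop :=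
  Reachable N t v ∧ Reachable N t (v.1 - 1, v.2 + 1) ∧
    ggCost N t w (v.1 - 1, v.2 + 1) + 1 = ggCost N t w v

/-- Potency, defined by (well-founded, hence unambiguous) recursion in
lexicographic order: `(i,d)` is potent iff (dominated by `(i,d-1)` implies
`(i,d-1)` potent and `w (i+1) (d-1) = 1`) and (dominated by `(i-1,d+1)` implies
`(i-1,d+1)` potent and `w i (d+1) = 1`). -/
inductive Potent (N t : ℕ) (w : ℤ → ℤ → ℕ) : ℤ × ℤ → Prop where
  | mk : ∀ v : ℤ × ℤ,
      (DomL N t w v → Potent N t w (v.1, v.2 - 1)) →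
      (DomL N t w v → w (v.1 + 1) (v.2 - 1) = 1) →
      (DomU N t w v → Potent N t w (v.1 - 1, v.2 + 1)) →
      (DomU N t w v → w v.1 (v.2 + 1) = 1) →
      Potent N t w v

/-!
Every upper bound is a single edge of weight at most one. The lower bounds come from Bellman's
equation: the cost of a reachable `(i, d) ≠ (0, 0)` is attained through one of its in-neighbours
`(i - 1, d + 1)`, `(i, d - 1)`, `(i - 1, d)`. Checking these three cases gives
`c(i - 1, d + 1) ≤ c(i, d) + 1` by induction on `i + d`, then `c(i, d - 1) ≤ c(i, d) + 1` by
induction on `i`, and finally `c(i - 1, d) ≤ c(i, d)` from the two.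
-/

section Path

variable {V : Type*} {E : V → V → Prop} {wt : V → V → ℕ} {s u v : V} {l : List V}

theorem pathCost_concat : ∀ {l : List V}, l.getLast? = some u →
    pathCost wt (l ++ [v]) = pathCost wt l + wt u v
  | [], h => by simp at h
  | [_], h => by
    obtain rfl := Option.some.inj h
    simp [pathCost]
  | _ :: b :: l, h => by
    rw [List.getLast?_cons_cons] at h
    have ih := pathCost_concat (l := b :: l) h
    simp only [List.cons_append, pathCost] at ih ⊢
    rw [ih, add_assoc]

theorem IsPath.concat (h : IsPath E s u l) (he : E u v) : IsPath E s v (l ++ [v]) := by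
  obtain ⟨hs, hu, hl⟩ := h
  refine ⟨?_, by simp, hl.append (.singleton v) ?_⟩
  · rwa [List.head?_append_of_ne_nil _ (List.ne_nil_of_mem (List.mem_of_getLast? hu))]
  · simp_all

theorem IsPath.induction (P : V → Prop) (h : IsPath E s v l) (hs : P s)
    (carries : ∀ ⦃x y⦄, E x y → P x → P y) : P v :=
  h.2.2.induction P l carries (fun hne => by
    rwa [Option.some.inj ((List.head?_eq_some_head hne).symm.trans h.1)])
    v (List.mem_of_getLast? h.2.1)

theorem cost_le_pathCost (h : IsPath E s v l) : cost E wt s v ≤ pathCost wt l :=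
  Nat.sInf_le ⟨l, h, rfl⟩

theorem exists_isPath_pathCost_eq_cost (h : IsPath E s v l) :
    ∃ l', IsPath E s v l' ∧ pathCost wt l' = cost E wt s v :=
  Nat.sInf_mem (s := {c | ∃ l, IsPath E s v l ∧ pathCost wt l = c}) ⟨_, l, h, rfl⟩

theorem cost_le_cost_add (h : IsPath E s u l) (he : E u v) :
    cost E wt s v ≤ cost E wt s u + wt u v := by
  obtain ⟨l', hl', hcost⟩ := exists_isPath_pathCost_eq_cost (wt := wt) h
  calc cost E wt s v ≤ pathCost wt (l' ++ [v]) := cost_le_pathCost (hl'.concat he)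
    _ = cost E wt s u + wt u v := by rw [pathCost_concat hl'.2.1, hcost]

theorem exists_cost_eq_cost_add (h : IsPath E s v l) (hv : v ≠ s) :
    ∃ u l', IsPath E s u l' ∧ E u v ∧ cost E wt s v = cost E wt s u + wt u v := by
  obtain ⟨l, hl, hcost⟩ := exists_isPath_pathCost_eq_cost (wt := wt) h
  obtain ⟨hs, hvl, hchain⟩ := hl
  obtain ⟨l', rfl⟩ : ∃ l', l = l' ++ [v] := by
    obtain ⟨l', x, rfl⟩ := (List.eq_nil_or_concat l).resolve_left (by rintro rfl; simp at hs)
    exact ⟨l', by simpa using hvl⟩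
  have hne : l' ≠ [] := by rintro rfl; exact hv (by simpa using hs)
  obtain ⟨u, hu⟩ := Option.isSome_iff_exists.mp (List.getLast?_isSome.mpr hne)
  have hpath : IsPath E s u l' :=
    ⟨by rwa [List.head?_append_of_ne_nil _ hne] at hs, hu, hchain.left_of_append⟩
  have he : E u v := (List.isChain_append.mp hchain).2.2 u hu v rfl
  refine ⟨u, l', hpath, he, le_antisymm (cost_le_cost_add hpath he) ?_⟩
  rw [← hcost, pathCost_concat hu]
  exact Nat.add_le_add_right (cost_le_pathCost hpath) _

end Path

section Grid

variable {N t : ℕ} {w : ℤ → ℤ → ℕ} {i d : ℤ} {u v : ℤ × ℤ} {l : List (ℤ × ℤ)}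

theorem Reachable.of_ggEdge (hu : Reachable N t u) (he : ggEdge N t u v) : Reachable N t v := by
  obtain ⟨_, hv, h | h | h⟩ := he <;>
  · subst h
    simp only [Reachable, ggVertex] at hu hv ⊢
    omega

theorem Reachable.ne_zero_of_ggEdge (hu : Reachable N t u) (he : ggEdge N t u v) :
    v ≠ (0, 0) := by
  rintro rfl
  obtain ⟨a, b⟩ := u
  obtain ⟨_, _, h | h | h⟩ := he <;>
  · simp only [Prod.mk.injEq] at h
    simp only [Reachable, ggVertex] at hu
    omega

theorem Reachable.of_isPath (h : IsPath (ggEdge N t) (0, 0) v l) : Reachable N t v :=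
  h.induction _ (by simp [Reachable, ggVertex]) fun _ _ he hx => hx.of_ggEdge he

theorem ggEdge_of_deletion (hu : ggVertex N t (i - 1, d + 1)) (hv : ggVertex N t (i, d)) :
    ggEdge N t (i - 1, d + 1) (i, d) :=
  ⟨hu, hv, .inl (by simp)⟩

theorem ggEdge_of_insertion (hu : ggVertex N t (i, d - 1)) (hv : ggVertex N t (i, d)) :
    ggEdge N t (i, d - 1) (i, d) :=
  ⟨hu, hv, .inr (.inl (by simp))⟩

theorem ggEdge_of_vertical (hu : ggVertex N t (i - 1, d)) (hv : ggVertex N t (i, d)) :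
    ggEdge N t (i - 1, d) (i, d) :=
  ⟨hu, hv, .inr (.inr (by simp))⟩

theorem Reachable.exists_isPath {i d : ℤ} (h : Reachable N t (i, d)) :
    ∃ l, IsPath (ggEdge N t) (0, 0) (i, d) l := by
  have hv : ggVertex N t (i, d) := h.1
  simp only [Reachable, ggVertex] at h hv
  by_cases hd : 0 < d
  · obtain ⟨l, hl⟩ := Reachable.exists_isPath (i := i) (d := d - 1)
      (by simp only [Reachable, ggVertex]; omega)
    exact ⟨_, hl.concat (ggEdge_of_insertion (by simp only [ggVertex]; omega) hv)⟩
  by_cases hid : 0 < i + d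
  · obtain ⟨l, hl⟩ := Reachable.exists_isPath (i := i - 1) (d := d)
      (by simp only [Reachable, ggVertex]; omega)
    exact ⟨_, hl.concat (ggEdge_of_vertical (by simp only [ggVertex]; omega) hv)⟩
  by_cases hi : 0 < i
  · obtain ⟨l, hl⟩ := Reachable.exists_isPath (i := i - 1) (d := d + 1)
      (by simp only [Reachable, ggVertex]; omega)
    exact ⟨_, hl.concat (ggEdge_of_deletion (by simp only [ggVertex]; omega) hv)⟩
  obtain ⟨rfl, rfl⟩ : i = 0 ∧ d = 0 := by omega
  exact ⟨[(0, 0)], rfl, rfl, .singleton _⟩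
termination_by i.toNat + d.natAbs
decreasing_by all_goals omega

theorem ggCost_le_of_deletion (hu : Reachable N t (i - 1, d + 1)) (hv : ggVertex N t (i, d)) :
    ggCost N t w (i, d) ≤ ggCost N t w (i - 1, d + 1) + 1 := by
  obtain ⟨l, hl⟩ := hu.exists_isPath
  simpa [ggCost, ggWt] using cost_le_cost_add (wt := ggWt w) hl (ggEdge_of_deletion hu.1 hv)

theorem ggCost_le_of_insertion (hu : Reachable N t (i, d - 1)) (hv : ggVertex N t (i, d)) :
    ggCost N t w (i, d) ≤ ggCost N t w (i, d - 1) + 1 := by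
  obtain ⟨l, hl⟩ := hu.exists_isPath
  simpa [ggCost, ggWt] using cost_le_cost_add (wt := ggWt w) hl (ggEdge_of_insertion hu.1 hv)

theorem ggCost_le_of_vertical (hu : Reachable N t (i - 1, d)) (hv : ggVertex N t (i, d)) :
    ggCost N t w (i, d) ≤ ggCost N t w (i - 1, d) + w i d := by
  obtain ⟨l, hl⟩ := hu.exists_isPath
  simpa [ggCost, ggWt] using cost_le_cost_add (wt := ggWt w) hl (ggEdge_of_vertical hu.1 hv)

theorem ggCost_bellman (h : Reachable N t (i, d)) (h0 : (i, d) ≠ (0, 0)) :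
    (Reachable N t (i - 1, d + 1) ∧ ggCost N t w (i, d) = ggCost N t w (i - 1, d + 1) + 1) ∨
    (Reachable N t (i, d - 1) ∧ ggCost N t w (i, d) = ggCost N t w (i, d - 1) + 1) ∨
    (Reachable N t (i - 1, d) ∧ ggCost N t w (i, d) = ggCost N t w (i - 1, d) + w i d) := by
  obtain ⟨l, hl⟩ := h.exists_isPath
  obtain ⟨⟨a, b⟩, l', hl', ⟨-, -, he⟩, hc⟩ := exists_cost_eq_cost_add (wt := ggWt w) hl h0
  have hu : Reachable N t (a, b) := .of_isPath hl'
  simp only [Prod.mk.injEq] at he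
  rcases he with ⟨rfl, rfl⟩ | ⟨rfl, rfl⟩ | ⟨rfl, rfl⟩
  · left
    simpa [ggCost, ggWt] using And.intro hu hc
  · right; left
    simpa [ggCost, ggWt] using And.intro hu hc
  · right; right
    simpa [ggCost, ggWt] using And.intro hu hc

theorem le_ggCost_add_one_of_deletion {i d : ℤ} (hu : Reachable N t (i - 1, d + 1))
    (hv : ggVertex N t (i, d)) : ggCost N t w (i - 1, d + 1) ≤ ggCost N t w (i, d) + 1 := by
  have he := ggEdge_of_deletion hu.1 hv
  have hins (h : Reachable N t (i - 1, d)) :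
      ggCost N t w (i - 1, d + 1) ≤ ggCost N t w (i - 1, d) + 1 := by
    simpa using ggCost_le_of_insertion (w := w) (by simpa using h) hu.1
  rcases ggCost_bellman (w := w) (hu.of_ggEdge he) (hu.ne_zero_of_ggEdge he)
    with ⟨-, hc⟩ | ⟨hp, hc⟩ | ⟨hp, hc⟩
  · omega
  · have hp' : Reachable N t (i - 1, d) := by simp only [Reachable, ggVertex] at hp hu ⊢; omega
    have := le_ggCost_add_one_of_deletion (i := i) (d := d - 1) (by simpa using hp') hp.1
    simp only [sub_add_cancel] at this
    have := hins hp'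
    omega
  · have := hins hp
    omega
termination_by (i + d).toNat
decreasing_by simp only [Reachable, ggVertex] at hp; omega

theorem le_ggCost_add_one_of_insertion {i d : ℤ} (hu : Reachable N t (i, d - 1))
    (hv : ggVertex N t (i, d)) : ggCost N t w (i, d - 1) ≤ ggCost N t w (i, d) + 1 := by
  have he := ggEdge_of_insertion hu.1 hv
  have hdel (h : Reachable N t (i - 1, d)) :
      ggCost N t w (i, d - 1) ≤ ggCost N t w (i - 1, d) + 1 := by
    simpa using ggCost_le_of_deletion (w := w) (by simpa using h) hu.1
  rcases ggCost_bellman (w := w) (hu.of_ggEdge he) (hu.ne_zero_of_ggEdge he)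
    with ⟨hp, hc⟩ | ⟨-, hc⟩ | ⟨hp, hc⟩
  · have hp' : Reachable N t (i - 1, d) := by simp only [Reachable, ggVertex] at hp hu ⊢; omega
    have := le_ggCost_add_one_of_insertion (i := i - 1) (d := d + 1) (by simpa using hp') hp.1
    simp only [add_sub_cancel_right] at this
    have := hdel hp'
    omega
  · omega
  · have := hdel hp
    omega
termination_by i.toNat
decreasing_by simp only [Reachable, ggVertex] at hp; omega

theorem le_ggCost_of_vertical (hu : Reachable N t (i - 1, d)) (hv : ggVertex N t (i, d)) :
    ggCost N t w (i - 1, d) ≤ ggCost N t w (i, d) := by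
  have he := ggEdge_of_vertical hu.1 hv
  rcases ggCost_bellman (w := w) (hu.of_ggEdge he) (hu.ne_zero_of_ggEdge he)
    with ⟨hp, hc⟩ | ⟨hp, hc⟩ | ⟨-, hc⟩
  · have := le_ggCost_add_one_of_insertion (w := w) (by simpa using hu) hp.1
    simp only [add_sub_cancel_right] at this
    omega
  · have := le_ggCost_add_one_of_deletion (w := w) (by simpa using hu) hp.1
    simp only [sub_add_cancel] at this
    omega
  · omega

end Grid

theorem stmt1_general (N t : ℕ) (w : ℤ → ℤ → ℕ)
    (hw1 : ∀ i d, w i d ≤ 1)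
    (i d : ℤ) (hv : ggVertex N t (i, d)) :
    (Reachable N t (i - 1, d) →
      ggCost N t w (i - 1, d) ≤ ggCost N t w (i, d) ∧
      ggCost N t w (i, d) ≤ ggCost N t w (i - 1, d) + 1) ∧
    (Reachable N t (i, d - 1) →
      ggCost N t w (i, d - 1) ≤ ggCost N t w (i, d) + 1 ∧
      ggCost N t w (i, d) ≤ ggCost N t w (i, d - 1) + 1) ∧
    (Reachable N t (i - 1, d + 1) →
      ggCost N t w (i - 1, d + 1) ≤ ggCost N t w (i, d) + 1 ∧
      ggCost N t w (i, d) ≤ ggCost N t w (i - 1, d + 1) + 1) :=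
  ⟨fun h => ⟨le_ggCost_of_vertical h hv,
      (ggCost_le_of_vertical h hv).trans (Nat.add_le_add_left (hw1 i d) _)⟩,
    fun h => ⟨le_ggCost_add_one_of_insertion h hv, ggCost_le_of_insertion h hv⟩,
    fun h => ⟨le_ggCost_add_one_of_deletion h hv, ggCost_le_of_deletion h hv⟩⟩

theorem stmt1 (N t : ℕ) (w : ℤ → ℤ → ℕ)
    (hw1 : ∀ i d, w i d ≤ 1)
    (hw0 : ∀ i d : ℤ, ¬(1 ≤ i ∧ i ≤ (N : ℤ) ∧ -(t : ℤ) ≤ d ∧ d ≤ (t : ℤ)) → w i d = 0)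
    (i d : ℤ) (hv : ggVertex N t (i, d)) :
    (Reachable N t (i - 1, d) →
      ggCost N t w (i - 1, d) ≤ ggCost N t w (i, d) ∧
      ggCost N t w (i, d) ≤ ggCost N t w (i - 1, d) + 1) ∧
    (Reachable N t (i, d - 1) →
      ggCost N t w (i, d - 1) ≤ ggCost N t w (i, d) + 1 ∧
      ggCost N t w (i, d) ≤ ggCost N t w (i, d - 1) + 1) ∧
    (Reachable N t (i - 1, d + 1) →
      ggCost N t w (i - 1, d + 1) ≤ ggCost N t w (i, d) + 1 ∧
      ggCost N t w (i, d) ≤ ggCost N t w (i - 1, d + 1) + 1) :=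
  stmt1_general N t w hw1 i d hv

end Stmt1
end

section
/- Let Σ be an alphabet, x,y ∈ Σ^n, i ∈ [1..n], and let D ⊆ ℤ be a finite set with |D| ≥ 2. Set g = gcd{d − d' : d > d', d,d' ∈ D}, m = max D − min D, and p = x_{[i−g+1..i]} ∈ Σ^g. Assume i − 2m + 1 ≥ 1, i − 2m + 1 + min D ≥ 1, and i + max D ≤ n. If for every d ∈ D one has x_{[i−2m+1..i]} = y_{[i−2m+1..i]+d}, then the string x_{[i−2m+1..i]} is periodic with period length g and period pattern p, and the string y_{[i−2m+1+min D .. i+max D]} is periodic with period length g and period pattern p. -/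
/-!
Statement 6 (Lemma periodicity, part (a)).  Strings of length `n` are modelled as
functions `ℤ → α` on positions `1..n`.  The substring `x_{[a..b]}` being periodic with
period length `g` and period pattern `p` (where `p_k = x_{i-g+k}` for `k ∈ [1..g]`)
is expressed pointwise: `x j = p (((j - a) mod g) + 1)` for all `a ≤ j ≤ b`.
-/

namespace Stmt6

/-- `e` is a period of `x` on the window `[a, iEnd]`, with `1 ≤ e ≤ m`. -/
def Per {α : Type*} (x : ℤ → α) (a iEnd m e : ℤ) : Prop :=
  1 ≤ e ∧ e ≤ m ∧ ∀ j, a ≤ j → j + e ≤ iEnd → x j = x (j + e)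

lemma per_sub {α : Type*} {x : ℤ → α} {a iEnd m e e' : ℤ}
    (hlen : iEnd = a + 2 * m - 1)
    (he : Per x a iEnd m e) (he' : Per x a iEnd m e') (hlt : e' < e) :
    Per x a iEnd m (e - e') := by
  obtain ⟨he1, he2, heP⟩ := he
  obtain ⟨he1', he2', heP'⟩ := he'
  refine ⟨by omega, by omega, ?_⟩
  intro j hja hji
  by_cases hc : j + e ≤ iEnd
  · calc x j = x (j + e) := heP j hja hc
    _ = x (j + (e - e') + e') := by rw [show j + e = j + (e - e') + e' by ring]
    _ = x (j + (e - e')) := (heP' (j + (e - e')) (by omega) (by omega)).symm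
  · -- j is in the right half; step backwards by e' first
    calc x j = x (j - e' + e') := by rw [show j - e' + e' = j by ring]
    _ = x (j - e') := (heP' (j - e') (by omega) (by omega)).symm
    _ = x (j - e' + e) := heP (j - e') (by omega) (by omega)
    _ = x (j + (e - e')) := by rw [show j - e' + e = j + (e - e') by ring]

theorem stmt6 {α : Type*} (n : ℕ) (x y : ℤ → α) (i : ℤ)
    (hi1 : 1 ≤ i) (hin : i ≤ (n : ℤ))
    (D : Finset ℤ) (hDcard : 2 ≤ D.card) (hDne : D.Nonempty)
    (g m : ℤ)
    (hg : g = Finset.gcd ((D ×ˢ D).filter fun q => q.2 < q.1) fun q => q.1 - q.2)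
    (hm : m = D.max' hDne - D.min' hDne)
    (h1 : 1 ≤ i - 2 * m + 1)
    (h2 : 1 ≤ i - 2 * m + 1 + D.min' hDne)
    (h3 : i + D.max' hDne ≤ (n : ℤ))
    (hmatch : ∀ d ∈ D, ∀ j, i - 2 * m + 1 ≤ j → j ≤ i → x j = y (j + d)) :
    (∀ j, i - 2 * m + 1 ≤ j → j ≤ i →
      x j = x (i - g + ((j - (i - 2 * m + 1)) % g + 1))) ∧
    (∀ j, i - 2 * m + 1 + D.min' hDne ≤ j → j ≤ i + D.max' hDne →
      y j = x (i - g + ((j - (i - 2 * m + 1 + D.min' hDne)) % g + 1))) := by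
  classical
  have hmin_mem := D.min'_mem hDne
  have hmax_mem := D.max'_mem hDne
  have hminmax : D.min' hDne < D.max' hDne := by
    obtain ⟨u, hu, v, hv, huv⟩ := Finset.one_lt_card.mp (show 1 < D.card by omega)
    exact Finset.min'_lt_max' D hu hv huv
  have hm0 : 0 < m := by omega
  set a : ℤ := i - 2 * m + 1 with ha
  have hlen : i = a + 2 * m - 1 := by omega
  -- every positive difference of elements of D is a period of x on [a, i]
  have perE : ∀ d ∈ D, ∀ d' ∈ D, d' < d → Per x a i m (d - d') := by
    intro d hd d' hd' hlt
    refine ⟨by omega, ?_, ?_⟩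
    · have hle1 : d ≤ D.max' hDne := Finset.le_max' D d hd
      have hle2 : D.min' hDne ≤ d' := Finset.min'_le D d' hd'
      omega
    · intro j hja hji
      have hx1 : x j = y (j + d) := hmatch d hd j hja (by omega)
      have hx2 : x (j + (d - d')) = y (j + (d - d') + d') :=
        hmatch d' hd' (j + (d - d')) (by omega) (by omega)
      rw [hx1, hx2, show j + (d - d') + d' = j + d by ring]
  -- existence of a period in ℕ
  have hEx : ∃ k : ℕ, Per x a i m (k : ℤ) := by
    refine ⟨m.toNat, ?_⟩
    rw [Int.toNat_of_nonneg hm0.le]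
    have h := perE _ hmax_mem _ hmin_mem hminmax
    rwa [← hm] at h
  set e0 : ℕ := Nat.find hEx with he0def
  have he0 : Per x a i m (e0 : ℤ) := Nat.find_spec hEx
  have he0pos : 0 < (e0 : ℤ) := by exact_mod_cast lt_of_lt_of_le one_pos he0.1
  -- minimality: e0 divides every period
  have hdvdN : ∀ k : ℕ, Per x a i m (k : ℤ) → (e0 : ℤ) ∣ (k : ℤ) := by
    intro k
    induction k using Nat.strong_induction_on with
    | _ k ih =>
      intro hk
      have hke0 : e0 ≤ k := Nat.find_min' hEx hk
      by_cases heq : k = e0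
      · rw [heq]
      · have hlt : e0 < k := lt_of_le_of_ne hke0 (Ne.symm heq)
        have hsub : Per x a i m ((k - e0 : ℕ) : ℤ) := by
          have h := per_sub hlen hk he0 (by exact_mod_cast hlt)
          rwa [show ((k : ℤ) - e0) = ((k - e0 : ℕ) : ℤ) by
            rw [Nat.cast_sub hlt.le]] at h
        have hd := ih (k - e0) (by omega) hsub
        rw [Nat.cast_sub hlt.le] at hd
        have := dvd_add hd (dvd_refl (e0 : ℤ))
        simpa using this
  have hdvdZ : ∀ e : ℤ, Per x a i m e → (e0 : ℤ) ∣ e := by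
    intro e he
    have h1e : (0 : ℤ) ≤ e := le_trans zero_le_one he.1
    have := hdvdN e.toNat (by rwa [Int.toNat_of_nonneg h1e])
    rwa [Int.toNat_of_nonneg h1e] at this
  -- e0 divides g
  have he0g : (e0 : ℤ) ∣ g := by
    rw [hg]
    refine Finset.dvd_gcd ?_
    intro q hq
    simp only [Finset.mem_filter, Finset.mem_product] at hq
    exact hdvdZ _ (perE q.1 hq.1.1 q.2 hq.1.2 hq.2)
  -- g divides m, g divides d - min for d ∈ D, g positive
  have hgm : g ∣ m := by
    have hmem : (D.max' hDne, D.min' hDne) ∈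
        (D ×ˢ D).filter (fun q => q.2 < q.1) := by
      rw [Finset.mem_filter, Finset.mem_product]
      exact ⟨⟨hmax_mem, hmin_mem⟩, hminmax⟩
    have h := Finset.gcd_dvd (f := fun q : ℤ × ℤ => q.1 - q.2) hmem
    rw [hg, hm]
    exact h
  have hgnonneg : 0 ≤ g := by
    have habs : |g| = g := by
      rw [Int.abs_eq_normalize, hg, Finset.normalize_gcd]
    rw [← habs]; exact abs_nonneg g
  have hgpos : 0 < g := by
    rcases hgnonneg.lt_or_eq with h | h
    · exact h
    · exfalso
      have : g ∣ m := hgm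
      rw [← h] at this
      have := eq_zero_of_zero_dvd this
      omega
  have hgdmin : ∀ d ∈ D, g ∣ d - D.min' hDne := by
    intro d hd
    rcases eq_or_lt_of_le (Finset.min'_le D d hd) with h | h
    · rw [← h, sub_self]; exact dvd_zero g
    · have hmem : (d, D.min' hDne) ∈
          (D ×ˢ D).filter (fun q => q.2 < q.1) := by
        rw [Finset.mem_filter, Finset.mem_product]
        exact ⟨⟨hd, hmin_mem⟩, h⟩
      have h2 := Finset.gcd_dvd (f := fun q : ℤ × ℤ => q.1 - q.2) hmem
      rw [hg]
      exact h2
  -- multi-step lemma with step e0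
  have hms : ∀ kk : ℕ, ∀ j, a ≤ j → j + (e0 : ℤ) * kk ≤ i → x j = x (j + (e0 : ℤ) * kk) := by
    intro kk
    induction kk with
    | zero => intro j _ _; simp
    | succ kk ih =>
      intro j hja hji
      have hcast : ((kk + 1 : ℕ) : ℤ) = (kk : ℤ) + 1 := by push_cast; ring
      rw [hcast] at hji ⊢
      have hb : j + (e0 : ℤ) * kk ≤ i := by nlinarith [he0pos]
      calc x j = x (j + (e0 : ℤ) * kk) := ih j hja hb
      _ = x (j + (e0 : ℤ) * kk + e0) :=
          he0.2.2 (j + (e0 : ℤ) * kk) (by nlinarith [he0pos]) (by linarith)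
      _ = x (j + (e0 : ℤ) * ((kk : ℤ) + 1)) := by
          rw [show j + (e0 : ℤ) * kk + e0 = j + (e0 : ℤ) * ((kk : ℤ) + 1) by ring]
  -- reachability: equal values at positions congruent mod e0 within the window
  have hreach : ∀ j t : ℤ, a ≤ j → j ≤ t → t ≤ i → (e0 : ℤ) ∣ t - j → x j = x t := by
    intro j t hja hjt hti hdvd
    obtain ⟨K, hK⟩ := hdvd
    have hK0 : 0 ≤ K := by nlinarith [he0pos]
    have hKn : ((K.toNat : ℕ) : ℤ) = K := Int.toNat_of_nonneg hK0
    have := hms K.toNat j hja (by rw [hKn]; linarith)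
    rw [hKn, show j + (e0 : ℤ) * K = t by linarith] at this
    exact this
  -- Part 1
  have part1 : ∀ j, a ≤ j → j ≤ i → x j = x (i - g + ((j - a) % g + 1)) := by
    intro j hja hji
    have hr0 : 0 ≤ (j - a) % g := Int.emod_nonneg _ (ne_of_gt hgpos)
    have hrg : (j - a) % g < g := Int.emod_lt_of_pos _ hgpos
    have hd : (j - a) % g = (j - a) - g * ((j - a) / g) := by
      have := Int.mul_ediv_add_emod (j - a) g; linarith
    obtain ⟨q, hq⟩ := hgm
    have heqt : i - g + ((j - a) % g + 1) - j = g * (2 * q - 1 - (j - a) / g) := by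
      rw [hd, hlen, hq]; ring
    have hjt : j ≤ i - g + ((j - a) % g + 1) := by
      by_contra hcon
      push_neg at hcon
      have hK : g * (2 * q - 1 - (j - a) / g) < 0 := by omega
      have hKneg : 2 * q - 1 - (j - a) / g ≤ -1 := by nlinarith
      have : g * (2 * q - 1 - (j - a) / g) ≤ g * (-1) :=
        mul_le_mul_of_nonneg_left hKneg hgnonneg
      omega
    refine hreach j _ hja hjt (by omega) ?_
    rw [heqt]
    exact he0g.mul_right _
  -- Part 2
  have part2 : ∀ j, a + D.min' hDne ≤ j → j ≤ i + D.max' hDne →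
      y j = x (i - g + ((j - (a + D.min' hDne)) % g + 1)) := by
    intro j hj1 hj2
    obtain ⟨d, hd, hd1, hd2⟩ : ∃ d ∈ D, a + d ≤ j ∧ j ≤ i + d := by
      by_cases hc : j ≤ i + D.min' hDne
      · exact ⟨D.min' hDne, hmin_mem, hj1, hc⟩
      · exact ⟨D.max' hDne, hmax_mem, by omega, hj2⟩
    have hyx : y j = x (j - d) := by
      have h := hmatch d hd (j - d) (by omega) (by omega)
      rw [show j - d + d = j by ring] at h
      exact h.symm
    have hmodeq : (j - d - a) % g = (j - (a + D.min' hDne)) % g := by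
      have : (j - d - a) ≡ (j - (a + D.min' hDne)) [ZMOD g] := by
        refine Int.ModEq.symm (Int.modEq_iff_dvd.mpr ?_)
        have := hgdmin d hd
        have heq : (j - (a + D.min' hDne)) - (j - d - a) = d - D.min' hDne := by ring
        rw [show (j - d - a) - (j - (a + D.min' hDne)) = -(d - D.min' hDne) by ring]
        exact (hgdmin d hd).neg_right
      exact this
    rw [hyx, part1 (j - d) (by omega) (by omega), hmodeq]
  exact ⟨part1, part2⟩

end Stmt6
end

section
/- Let Σ be an alphabet, x,y ∈ Σ^n, i ∈ [1..n], and let D ⊆ ℤ be a finite set with |D| ≥ 2. Set g = gcd{d − d' : d > d', d,d' ∈ D}, m = max D − min D, and let p ∈ Σ^g. Assume i − 2m + 1 ≥ 1, i − 2m + 1 + min D ≥ 1, i + m ≤ n, and i + 1 + max D ≤ n. Suppose that x_{[i−2m+1..i]} is periodic with period length g and period pattern p, that y_{[i−2m+1+min D .. i+max D]} is periodic with period length g and period pattern p, and that x_{i+1} ≠ p_1 or y_{i+1+max D} ≠ p_1. Then for every d ∈ D, except possibly for at most one element of D, there exists a row j ∈ [i+1..i+m] such that 1 ≤ j+d ≤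 n and x_j ≠ y_{j+d}. -/
/-!
Statement 7 (Lemma periodicity, part (b)).  Strings of length `n` are modelled as
functions `ℤ → α` on positions `1..n`; the pattern `p ∈ Σ^g` is a function `ℤ → α`
on positions `1..g`.  Periodicity of a substring `x_{[a..b]}` with pattern `p` is
expressed pointwise: `x j = p (((j - a) mod g) + 1)` for all `a ≤ j ≤ b`.
-/

namespace Stmt7

theorem stmt7 {α : Type*} (n : ℕ) (x y : ℤ → α) (i : ℤ)
    (hi1 : 1 ≤ i) (hin : i ≤ (n : ℤ))
    (D : Finset ℤ) (hDcard : 2 ≤ D.card) (hDne : D.Nonempty)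
    (g m : ℤ) (p : ℤ → α)
    (hg : g = Finset.gcd ((D ×ˢ D).filter fun q => q.2 < q.1) fun q => q.1 - q.2)
    (hm : m = D.max' hDne - D.min' hDne)
    (h1 : 1 ≤ i - 2 * m + 1)
    (h2 : 1 ≤ i - 2 * m + 1 + D.min' hDne)
    (h3 : i + m ≤ (n : ℤ))
    (h4 : i + 1 + D.max' hDne ≤ (n : ℤ))
    (hxper : ∀ j, i - 2 * m + 1 ≤ j → j ≤ i →
      x j = p ((j - (i - 2 * m + 1)) % g + 1))
    (hyper : ∀ j, i - 2 * m + 1 + D.min' hDne ≤ j → j ≤ i + D.max' hDne →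
      y j = p ((j - (i - 2 * m + 1 + D.min' hDne)) % g + 1))
    (hbreak : x (i + 1) ≠ p 1 ∨ y (i + 1 + D.max' hDne) ≠ p 1) :
    ∃ e : ℤ, ∀ d ∈ D, d ≠ e →
      ∃ j, i + 1 ≤ j ∧ j ≤ i + m ∧ 1 ≤ j + d ∧ j + d ≤ (n : ℤ) ∧ x j ≠ y (j + d) := by
  classical
  obtain ⟨d1, hd1, d2, hd2, hd12⟩ := Finset.one_lt_card.mp hDcard
  set dmin := D.min' hDne with hdmin
  set dmax := D.max' hDne with hdmaxdef
  have hdvd : ∀ d ∈ D, ∀ d' ∈ D, g ∣ d - d' := by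
    intro d hd d' hd'
    rcases lt_trichotomy d' d with h | h | h
    · have hmem : (d, d') ∈ (D ×ˢ D).filter fun q => q.2 < q.1 := by
        simp [Finset.mem_filter, Finset.mem_product, hd, hd', h]
      exact hg ▸ Finset.gcd_dvd hmem
    · simp [h]
    · have hmem : (d', d) ∈ (D ×ˢ D).filter fun q => q.2 < q.1 := by
        simp [Finset.mem_filter, Finset.mem_product, hd, hd', h]
      have hdd := hg ▸ Finset.gcd_dvd hmem
      have : g ∣ -(d' - d) := dvd_neg.mpr hdd
      simpa using this
  have hminmem : dmin ∈ D := D.min'_mem hDne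
  have hmaxmem : dmax ∈ D := D.max'_mem hDne
  have hgm : g ∣ m := hm ▸ hdvd _ hmaxmem _ hminmem
  have hmpos : 0 < m := by
    have h := D.min'_lt_max' hd1 hd2 hd12
    omega
  have hY1 : ∀ d ∈ D, ∀ j : ℤ, i + 1 ≤ j → j + d ≤ i + dmax →
      y (j + d) = p ((j - (i - 2 * m + 1)) % g + 1) := by
    intro d hd j hj1 hj2
    obtain ⟨k, hk⟩ := hdvd d hd dmin hminmem
    have hdmin_le : dmin ≤ d := D.min'_le d hd
    have hy := hyper (j + d) (by omega) (by omega)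
    rw [hy]
    congr 2
    have heq : j + d - (i - 2 * m + 1 + dmin) = (j - (i - 2 * m + 1)) + g * k := by omega
    rw [heq, Int.add_mul_emod_self_left]
  have hmod1 : (i + 1 - (i - 2 * m + 1)) % g = 0 := by
    have heq : i + 1 - (i - 2 * m + 1) = 2 * m := by ring
    rw [heq]
    exact Int.emod_eq_zero_of_dvd (hgm.mul_left 2)
  have hmod0 : ∀ d ∈ D, (i + 1 + dmax - d - (i - 2 * m + 1)) % g = 0 := by
    intro d hd
    have h1' : g ∣ dmax - d := hdvd dmax hmaxmem d hd
    have heq : i + 1 + dmax - d - (i - 2 * m + 1) = 2 * m + (dmax - d) := by ring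
    rw [heq]
    exact Int.emod_eq_zero_of_dvd (dvd_add (hgm.mul_left 2) h1')
  by_cases hA : ∃ j, (i + 1 ≤ j ∧ j ≤ i + m ∧ x j ≠ p ((j - (i - 2 * m + 1)) % g + 1))
  · obtain ⟨j0, ⟨hj0a, hj0b, hj0x⟩, hj0min⟩ :=
      Int.exists_least_of_bdd
        (P := fun j => i + 1 ≤ j ∧ j ≤ i + m ∧ x j ≠ p ((j - (i - 2 * m + 1)) % g + 1))
        ⟨i + 1, fun z hz => hz.1⟩ hA
    refine ⟨i + 1 + dmax - j0, ?_⟩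
    intro d hd hdne
    have hdmin_le : dmin ≤ d := D.min'_le d hd
    have hdmax_ge : d ≤ dmax := D.le_max' d hd
    rcases lt_or_gt_of_ne (show i + 1 + dmax - d ≠ j0 by omega) with hlt | hgt
    · -- jd < j0
      have hybreak : y (i + 1 + dmax) ≠ p 1 := by
        rcases hbreak with hb | hb
        · exfalso
          have hle : j0 ≤ i + 1 :=
            hj0min (i + 1) ⟨le_refl _, by omega, by rw [hmod1]; simpa using hb⟩
          omega
        · exact hb
      have hxjd : x (i + 1 + dmax - d) = p 1 := by
        by_contra hcon
        have hle : j0 ≤ i + 1 + dmax - d :=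
          hj0min _ ⟨by omega, by omega, by rw [hmod0 d hd]; simpa using hcon⟩
        omega
      refine ⟨i + 1 + dmax - d, by omega, by omega, by omega, by omega, ?_⟩
      have heq : i + 1 + dmax - d + d = i + 1 + dmax := by ring
      rw [heq, hxjd]
      exact hybreak.symm
    · -- j0 < jd : use j0
      refine ⟨j0, hj0a, hj0b, by omega, by omega, ?_⟩
      rw [hY1 d hd j0 hj0a (by omega)]
      exact hj0x
  · push_neg at hA
    have hybreak : y (i + 1 + dmax) ≠ p 1 := by
      rcases hbreak with hb | hb
      · exfalso
        have hx1 := hA (i + 1) (le_refl _) (by omega)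
        rw [hmod1] at hx1
        exact hb (by simpa using hx1)
      · exact hb
    refine ⟨dmin, ?_⟩
    intro d hd hdne
    have hdmin_le : dmin ≤ d := D.min'_le d hd
    have hdmax_ge : d ≤ dmax := D.le_max' d hd
    have hdgt : dmin < d := lt_of_le_of_ne hdmin_le (Ne.symm hdne)
    refine ⟨i + 1 + dmax - d, by omega, by omega, by omega, by omega, ?_⟩
    have hx := hA (i + 1 + dmax - d) (by omega) (by omega)
    rw [hmod0 d hd] at hx
    have heq : i + 1 + dmax - d + d = i + 1 + dmax := by ring
    rw [heq, hx]
    simpa using hybreak.symm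

end Stmt7
end

section
/- Let Σ be an alphabet, s ∈ Σ^n, and let L be a nonempty finite set of positive integers with 2·(max L) ≤ n. If s has period length ℓ for every ℓ ∈ L, then s has period length gcd L. -/
/-!
Statement 9.  A string `s ∈ Σ^n` (modelled as `s : ℕ → α` on positions `1..n`)
has period length `ℓ` if `s j = s (j + ℓ)` whenever `1 ≤ j` and `j + ℓ ≤ n`.
If `L` is a nonempty finite set of positive integers with `2 · max L ≤ n` and `s`
has period length `ℓ` for every `ℓ ∈ L`, then `s` has period length `gcd L`.
-/

namespace Stmt9

/-- `s ∈ Σ^n` has period length `ℓ`. -/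
def HasPeriod {α : Type*} (s : ℕ → α) (n ℓ : ℕ) : Prop :=
  ∀ j, 1 ≤ j → j + ℓ ≤ n → s j = s (j + ℓ)

lemma sub_period {α : Type*} (s : ℕ → α) (n p q : ℕ) (hq : 1 ≤ q) (hqp : q < p)
    (hn : p + q ≤ n) (hp : HasPeriod s n p) (hq' : HasPeriod s n q) :
    HasPeriod s n (p - q) := by
  intro j hj hjn
  by_cases h : j + p ≤ n
  · rw [hp j hj h]
    have e := hq' (j + (p - q)) (by omega) (by omega)
    rw [e]; congr 1; omega
  · have e1 := hq' (j - q) (by omega) (by omega)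
    have e2 := hp (j - q) (by omega) (by omega)
    have hjq : j - q + q = j := by omega
    rw [hjq] at e1
    rw [← e1, e2]; congr 1; omega

lemma two_periods {α : Type*} (s : ℕ → α) (n : ℕ) :
    ∀ m p q, p + q ≤ m → 1 ≤ p → 1 ≤ q → p + q ≤ n →
      HasPeriod s n p → HasPeriod s n q → HasPeriod s n (Nat.gcd p q) := by
  intro m
  induction m using Nat.strong_induction_on with
  | _ m ih =>
    intro p q hm hp1 hq1 hn hp hq
    rcases lt_trichotomy p q with h | h | h
    · have hsub := sub_period s n q p hp1 h (by omega) hq hp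
      have := ih (m - 1) (by omega) (q - p) p (by omega) (by omega) hp1
        (by omega) hsub hp
      rwa [Nat.gcd_sub_self_left (le_of_lt h), Nat.gcd_comm] at this
    · subst h
      simpa [Nat.gcd_self] using hp
    · have hsub := sub_period s n p q hq1 h hn hp hq
      have := ih (m - 1) (by omega) (p - q) q (by omega) (by omega) hq1
        (by omega) hsub hq
      rwa [Nat.gcd_sub_self_left (le_of_lt h)] at this

lemma gcd_period {α : Type*} (s : ℕ → α) (n M : ℕ) :
    ∀ L : Finset ℕ, L.Nonempty → (∀ ℓ ∈ L, 1 ≤ ℓ) → (∀ ℓ ∈ L, ℓ ≤ M) →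
      2 * M ≤ n → (∀ ℓ ∈ L, HasPeriod s n ℓ) → HasPeriod s n (L.gcd id) := by
  intro L
  induction L using Finset.cons_induction with
  | empty => intro h; exact absurd h (by simp)
  | cons a L ha ih =>
    intro _ hpos hle hn hper
    rcases L.eq_empty_or_nonempty with rfl | hLne
    · simpa using hper a (by simp)
    · have hg := ih hLne (fun ℓ hℓ => hpos ℓ (Finset.mem_cons_of_mem hℓ))
        (fun ℓ hℓ => hle ℓ (Finset.mem_cons_of_mem hℓ)) hn
        (fun ℓ hℓ => hper ℓ (Finset.mem_cons_of_mem hℓ))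
      obtain ⟨b, hb⟩ := hLne
      have hgdvd : L.gcd id ∣ b := Finset.gcd_dvd hb
      have hgpos : 1 ≤ L.gcd id := by
        rcases Nat.eq_zero_or_pos (L.gcd id) with h0 | h0
        · rw [h0] at hgdvd
          have := Nat.eq_zero_of_zero_dvd hgdvd
          have := hpos b (Finset.mem_cons_of_mem hb); omega
        · exact h0
      have hgle : L.gcd id ≤ M :=
        le_trans (Nat.le_of_dvd (hpos b (Finset.mem_cons_of_mem hb)) hgdvd) (hle b (Finset.mem_cons_of_mem hb))
      have hale : a ≤ M := hle a (Finset.mem_cons_self a L)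
      have ha1 : 1 ≤ a := hpos a (Finset.mem_cons_self a L)
      rw [Finset.cons_eq_insert, Finset.gcd_insert]
      exact two_periods s n (a + L.gcd id) a (L.gcd id) le_rfl ha1 hgpos
        (by omega) (hper a (Finset.mem_cons_self a L)) hg

theorem stmt9 {α : Type*} (n : ℕ) (s : ℕ → α) (L : Finset ℕ) (hne : L.Nonempty)
    (hpos : ∀ ℓ ∈ L, 1 ≤ ℓ) (hmax : 2 * L.max' hne ≤ n)
    (hper : ∀ ℓ ∈ L, HasPeriod s n ℓ) :
    HasPeriod s n (L.gcd id) :=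
  gcd_period s n (L.max' hne) L hne hpos (fun ℓ hℓ => L.le_max' ℓ hℓ) hmax hper

end Stmt9
end

section
/- Let n ≥ 4 and let t be a positive integer with ln n ≤ t ≤ √n. Fix x,y ∈ {0,1}^n, i ∈ [1..n] and d ∈ [−t..t] with i + d ≥ 1. Let i' be the minimum index with i ≤ i' ≤ n and i' + d ≤ n such that Δ_H(x_{[i..i']}, y_{[i..i']+d}) ≥ 3t; if no such i' exists set i' = ∞, and otherwise let H = {j ∈ [i..i'] : x_j ≠ y_{j+d}}. Let S be the random subset of [0..n] obtained by including each row of [1..n] independently with probability (ln n)/t and always including row 0, and let B(i,d) be the event that i' < ∞ and H ∩ S = ∅. Then Pr[B(i,d)] ≤ (1 − (ln n)/t)^{3t} < 1/(3n(2t+1)). -/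
/-!
Statement 10 (Claim: bad sampling event).  Strings `x, y ∈ {0,1}^n` are modelled as
functions `ℤ → Bool` on positions `1..n`.  The random set `S ⊆ [0..n]` is modelled by
a point `ω` of the product Bernoulli(`ln n / t`) space `Fin n → Bool` (coordinate `k`
decides whether row `k+1` is included), row `0` being always included.
-/

namespace Stmt10

open MeasureTheory

/-- Bernoulli measure on `Bool` with parameter `p` (a probability measure when
`0 ≤ p ≤ 1`). -/
noncomputable def bern (p : ℝ) : Measure Bool :=
  ENNReal.ofReal p • Measure.dirac true + ENNReal.ofReal (1 - p) • Measure.dirac false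

/-- Product measure: each of the `n` rows is sampled independently with probability `p`. -/
noncomputable def sampleMeasure (n : ℕ) (p : ℝ) : Measure (Fin n → Bool) :=
  Measure.pi fun _ => bern p

/-- The sampled set of rows `S ⊆ [0..n]`: row `0` together with the rows `k+1`
for which `ω k` is true. -/
def rowsOf (n : ℕ) (ω : Fin n → Bool) : Set ℤ :=
  insert 0 {j : ℤ | ∃ k : Fin n, ω k = true ∧ j = (k : ℕ) + 1}

/-- Hamming distance between `x_{[a..b]}` and `y_{[a..b]+d}`. -/
noncomputable def hamOn (x y : ℤ → Bool) (d a b : ℤ) : ℕ :=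
  ((Finset.Icc a b).filter fun j => x j ≠ y (j + d)).card

/-! The first index `i'` at which the mismatch count reaches `3t` depends only on `x`, `y`,
`i` and `d`, not on the sample, so the bad event is contained in the event that `S` misses a
fixed set of at least `3t` rows, which by independence has probability at most
`(1 - ln n / t)^{3t}`. Then `(1 - ln n / t)^{3t} ≤ e^{-3 ln n} = n^{-3}`, and
`n^3 > 3n(2t+1)` because `t ≤ √n ≤ n/2`. -/

lemma bern_singleton_false (p : ℝ) : bern p {false} = ENNReal.ofReal (1 - p) := by
  simp [bern]

lemma isProbabilityMeasure_bern {p : ℝ} (h0 : 0 ≤ p) (h1 : p ≤ 1) :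
    IsProbabilityMeasure (bern p) := by
  constructor
  simp only [bern, Measure.add_apply, Measure.smul_apply, measure_univ, smul_eq_mul, mul_one]
  rw [← ENNReal.ofReal_add h0 (by linarith)]
  norm_num

lemma sampleMeasure_forall_false {n : ℕ} {p : ℝ} (h0 : 0 ≤ p) (h1 : p ≤ 1)
    (K : Finset (Fin n)) :
    sampleMeasure n p {ω | ∀ k ∈ K, ω k = false} = ENNReal.ofReal (1 - p) ^ K.card := by
  have := isProbabilityMeasure_bern h0 h1
  have hcyl : {ω : Fin n → Bool | ∀ k ∈ K, ω k = false}
      = (K : Set (Fin n)).pi fun _ => {false} := by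
    ext ω; simp
  rw [hcyl, sampleMeasure, Measure.pi_pi_finset, Finset.prod_const, bern_singleton_false]

lemma sampleMeasure_forall_notMem_rowsOf_le {n : ℕ} {p : ℝ} (h0 : 0 ≤ p) (h1 : p ≤ 1)
    (H : Finset ℤ) (hH : ∀ j ∈ H, 1 ≤ j ∧ j ≤ n) :
    sampleMeasure n p {ω | ∀ j ∈ H, j ∉ rowsOf n ω} ≤ ENNReal.ofReal (1 - p) ^ H.card := by
  classical
  set K : Finset (Fin n) := Finset.univ.filter fun k => ((k : ℕ) : ℤ) + 1 ∈ H
  have hsub : {ω | ∀ j ∈ H, j ∉ rowsOf n ω} ⊆ {ω | ∀ k ∈ K, ω k = false} := by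
    intro ω hω k hk
    have hk' : ((k : ℕ) : ℤ) + 1 ∈ H := (Finset.mem_filter.1 hk).2
    have := hω _ hk'
    simp only [rowsOf, Set.mem_insert_iff, Set.mem_ofPred_eq, not_or, not_exists, not_and] at this
    simpa using this.2 k
  have hcard : H.card ≤ K.card := by
    have hHK : H ⊆ K.image fun k : Fin n => ((k : ℕ) : ℤ) + 1 := by
      intro j hj
      obtain ⟨hj1, hjn⟩ := hH j hj
      refine Finset.mem_image.2 ⟨⟨(j - 1).toNat, by omega⟩, ?_, by simp; omega⟩
      simp only [K, Finset.mem_filter, Finset.mem_univ, true_and]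
      convert hj using 1; omega
    exact (Finset.card_le_card hHK).trans Finset.card_image_le
  calc sampleMeasure n p {ω | ∀ j ∈ H, j ∉ rowsOf n ω}
      ≤ sampleMeasure n p {ω | ∀ k ∈ K, ω k = false} := measure_mono hsub
    _ = ENNReal.ofReal (1 - p) ^ K.card := sampleMeasure_forall_false h0 h1 K
    _ ≤ ENNReal.ofReal (1 - p) ^ H.card :=
      pow_le_pow_of_le_one zero_le (ENNReal.ofReal_le_one.2 (by linarith)) hcard

lemma sampleMeasure_mismatches_notMem_rowsOf_le {n : ℕ} {p : ℝ} (h0 : 0 ≤ p) (h1 : p ≤ 1)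
    (x y : ℤ → Bool) {i a : ℤ} (d : ℤ) (hi : 1 ≤ i) (ha : a ≤ n) :
    sampleMeasure n p {ω | ∀ j, i ≤ j → j ≤ a → x j ≠ y (j + d) → j ∉ rowsOf n ω}
      ≤ ENNReal.ofReal (1 - p) ^ hamOn x y d i a := by
  have hset : {ω | ∀ j, i ≤ j → j ≤ a → x j ≠ y (j + d) → j ∉ rowsOf n ω}
      = {ω | ∀ j ∈ (Finset.Icc i a).filter fun j => x j ≠ y (j + d), j ∉ rowsOf n ω} := by
    ext ω; simp
  rw [hset]
  refine sampleMeasure_forall_notMem_rowsOf_le h0 h1 _ fun j hj => ?_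
  simp only [Finset.mem_filter, Finset.mem_Icc] at hj
  omega

lemma measure_exists_isLeast_le {α ι : Type*} [MeasurableSpace α] [PartialOrder ι]
    {μ : Measure α} {P : ι → Prop} {Q : ι → Set α} {c : ENNReal}
    (h : ∀ a, P a → μ (Q a) ≤ c) :
    μ {ω | ∃ a, P a ∧ (∀ r, P r → a ≤ r) ∧ ω ∈ Q a} ≤ c := by
  by_cases hleast : ∃ a, P a ∧ ∀ r, P r → a ≤ r
  · obtain ⟨a, ha, hmin⟩ := hleast
    have hsub : {ω | ∃ a, P a ∧ (∀ r, P r → a ≤ r) ∧ ω ∈ Q a} ⊆ Q a := by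
      rintro ω ⟨b, hb, hbmin, hω⟩
      rwa [le_antisymm (hbmin a ha) (hmin b hb)] at hω
    exact (measure_mono hsub).trans (h a ha)
  · have hempty : {ω | ∃ a, P a ∧ (∀ r, P r → a ≤ r) ∧ ω ∈ Q a} = ∅ :=
      Set.eq_empty_of_forall_notMem fun ω ⟨a, ha, hmin, _⟩ => hleast ⟨a, ha, hmin⟩
    simp [hempty]

lemma one_sub_log_div_pow_le {n t : ℕ} (hn : 0 < n) (hlog : Real.log n ≤ t) (k : ℕ) :
    (1 - Real.log n / t) ^ (t * k) ≤ 1 / (n : ℝ) ^ k := by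
  have hbase : 0 ≤ 1 - Real.log n / t := sub_nonneg.2 (div_le_one_of_le₀ hlog t.cast_nonneg)
  calc (1 - Real.log n / t) ^ (t * k) = ((1 - Real.log n / t) ^ t) ^ k := pow_mul _ _ _
    _ ≤ Real.exp (-Real.log n) ^ k :=
      pow_le_pow_left₀ (pow_nonneg hbase t) (Real.one_sub_div_pow_le_exp_neg hlog) k
    _ = 1 / (n : ℝ) ^ k := by
      rw [Real.exp_neg, Real.exp_log (by exact_mod_cast hn), inv_pow, one_div]

lemma three_mul_mul_two_mul_add_one_lt_cube {n t : ℝ} (hn : 4 ≤ n) (ht : t ≤ Real.sqrt n) :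
    3 * n * (2 * t + 1) < n ^ 3 := by
  have hsqrt : Real.sqrt n ≤ n / 2 := by
    rw [Real.sqrt_le_left (by linarith)]
    nlinarith
  calc 3 * n * (2 * t + 1) ≤ 3 * n * (n + 1) := by gcongr; linarith
    _ < n ^ 3 := by
      have h : 0 < n * (n - 3) - 3 := by nlinarith
      nlinarith [mul_pos (by linarith : (0 : ℝ) < n) h]

theorem stmt10_general (n t : ℕ) (hn : 4 ≤ n)
    (hlog : Real.log n ≤ (t : ℝ)) (hsqrt : (t : ℝ) ≤ Real.sqrt n)
    (x y : ℤ → Bool) (i d : ℤ)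
    (hi : 1 ≤ i) :
    sampleMeasure n (Real.log n / t)
        {ω | ∃ i' : ℤ,
          (i ≤ i' ∧ i' ≤ (n : ℤ) ∧ i' + d ≤ (n : ℤ) ∧ 3 * t ≤ hamOn x y d i i') ∧
          (∀ r : ℤ, (i ≤ r ∧ r ≤ (n : ℤ) ∧ r + d ≤ (n : ℤ) ∧ 3 * t ≤ hamOn x y d i r) →
            i' ≤ r) ∧
          ∀ j, i ≤ j → j ≤ i' → x j ≠ y (j + d) → j ∉ rowsOf n ω}
      ≤ ENNReal.ofReal ((1 - Real.log n / t) ^ (3 * t)) ∧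
    (1 - Real.log n / t) ^ (3 * t) < 1 / (3 * (n : ℝ) * (2 * (t : ℝ) + 1)) := by
  have hnR : (4 : ℝ) ≤ n := by exact_mod_cast hn
  have h0 : 0 ≤ Real.log n / t := div_nonneg (Real.log_nonneg (by linarith)) t.cast_nonneg
  have h1 : Real.log n / t ≤ 1 := div_le_one_of_le₀ hlog t.cast_nonneg
  refine ⟨measure_exists_isLeast_le fun a ⟨_, ha, _, hham⟩ => ?_, ?_⟩
  · calc _ ≤ ENNReal.ofReal (1 - Real.log n / t) ^ hamOn x y d i a :=
          sampleMeasure_mismatches_notMem_rowsOf_le h0 h1 x y d hi ha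
      _ ≤ ENNReal.ofReal (1 - Real.log n / t) ^ (3 * t) :=
          pow_le_pow_of_le_one zero_le (ENNReal.ofReal_le_one.2 (by linarith)) hham
      _ = _ := (ENNReal.ofReal_pow (by linarith) _).symm
  · calc (1 - Real.log n / t) ^ (3 * t) = (1 - Real.log n / t) ^ (t * 3) := by rw [mul_comm]
      _ ≤ 1 / (n : ℝ) ^ 3 := one_sub_log_div_pow_le (by omega) hlog 3
      _ < 1 / (3 * (n : ℝ) * (2 * (t : ℝ) + 1)) :=
          one_div_lt_one_div_of_lt (by positivity)
            (three_mul_mul_two_mul_add_one_lt_cube hnR hsqrt)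

theorem stmt10 (n t : ℕ) (hn : 4 ≤ n) (ht : 1 ≤ t)
    (hlog : Real.log n ≤ (t : ℝ)) (hsqrt : (t : ℝ) ≤ Real.sqrt n)
    (x y : ℤ → Bool) (i d : ℤ)
    (hi : 1 ≤ i) (hin : i ≤ (n : ℤ))
    (hd1 : -(t : ℤ) ≤ d) (hd2 : d ≤ (t : ℤ)) (hid : 1 ≤ i + d) :
    sampleMeasure n (Real.log n / t)
        {ω | ∃ i' : ℤ,
          (i ≤ i' ∧ i' ≤ (n : ℤ) ∧ i' + d ≤ (n : ℤ) ∧ 3 * t ≤ hamOn x y d i i') ∧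
          (∀ r : ℤ, (i ≤ r ∧ r ≤ (n : ℤ) ∧ r + d ≤ (n : ℤ) ∧ 3 * t ≤ hamOn x y d i r) →
            i' ≤ r) ∧
          ∀ j, i ≤ j → j ≤ i' → x j ≠ y (j + d) → j ∉ rowsOf n ω}
      ≤ ENNReal.ofReal ((1 - Real.log n / t) ^ (3 * t)) ∧
    (1 - Real.log n / t) ^ (3 * t) < 1 / (3 * (n : ℝ) * (2 * (t : ℝ) + 1)) :=
  stmt10_general n t hn hlog hsqrt x y i d hi

end Stmt10
end
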